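/- Let T be a rigid object in C and let X be an object of C. The following are equivalent: (a) X lies in C(T), i.e. there is a triangle T₁ → T₀ → X → ΣT₁ with T₀, T₁ ∈ add T; (b) for every triangle U → T₀ →f X → ΣU in which f is a right add T-approximation of X, the object U lies in add T; (c) for every triangle U → T₀ →f X → ΣU in which f is a minimal right add T-approximation of X, the object U lies in add T. -/

import Mathlib

/-!
Common setup: `C` is a Hom-finite, Krull-Schmidt (= idempotent complete, given
Hom-finiteness over a field), `k`-linear triangulated category with suspension
functor `Σ = shiftFunctor C (1 : ℤ)`, and `T` is a rigid object of `C`.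
-/

noncomputable section

open CategoryTheory CategoryTheory.Limits CategoryTheory.Pretriangulated

universe v u

namespace PaperBM

variable {C : Type u} [Category.{v} C] [Preadditive C] [HasZeroObject C]
  [HasShift C ℤ] [∀ n : ℤ, (shiftFunctor C n).Additive] [Pretriangulated C]
  [HasFiniteBiproducts C]

/-- `X` lies in `add T`: it is a direct summand of a finite direct sum of copies of `T`. -/
def memAdd (T X : C) : Prop :=
  ∃ (n : ℕ) (s : X ⟶ ⨁ (fun _ : Fin n => T)) (r : (⨁ fun _ : Fin n => T) ⟶ X), s ≫ r = 𝟙 X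

/-- `T` is rigid: `Hom_C(T, ΣT) = 0`. -/
def IsRigidObj (T : C) : Prop := ∀ f : T ⟶ (shiftFunctor C (1 : ℤ)).obj T, f = 0

/-- `Y ∈ T^⊥`, i.e. `Hom_C(X, ΣY) = 0` for all `X ∈ add T`. -/
def memTperp (T Y : C) : Prop :=
  ∀ (X : C), memAdd T X → ∀ f : X ⟶ (shiftFunctor C (1 : ℤ)).obj Y, f = 0

/-- `Y ∈ ⊥T`, i.e. `Hom_C(Y, ΣX) = 0` for all `X ∈ add T`. -/
def memPerpT (T Y : C) : Prop :=
  ∀ (X : C), memAdd T X → ∀ f : Y ⟶ (shiftFunctor C (1 : ℤ)).obj X, f = 0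

/-- `Y ∈ ΣT^⊥`, the image of `T^⊥` under the suspension `Σ`. -/
def memSigmaTperp (T Y : C) : Prop :=
  ∃ Z : C, memTperp T Z ∧ Nonempty (Y ≅ (shiftFunctor C (1 : ℤ)).obj Z)

/-- The map `f` factors through an object belonging to the class `P` of objects. -/
def FactorsThru (P : C → Prop) {A B : C} (f : A ⟶ B) : Prop :=
  ∃ (Z : C) (g : A ⟶ Z) (h : Z ⟶ B), P Z ∧ g ≫ h = f

/-- The class `S̃` of maps `f : X ⟶ Y` such that in a completion
`Σ⁻¹Z →h X →f Y →g Z` of `f` to a triangle (where `A` plays the role of `Σ⁻¹Z`,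
so that `Z = ΣA`), both `g` and `h` factor through an object of `ΣT^⊥`. -/
def Stilde (T : C) : MorphismProperty C := fun X Y f =>
  ∃ (A : C) (h : A ⟶ X) (g : Y ⟶ (shiftFunctor C (1 : ℤ)).obj A),
    (Triangle.mk h f g ∈ distTriang C) ∧
    FactorsThru (memSigmaTperp T) g ∧ FactorsThru (memSigmaTperp T) h

/-- The class `S` of maps `f : X ⟶ Y` such that in a completion
`Σ⁻¹Z →h X →f Y →g Z` of `f` to a triangle (where `A` plays the role of `Σ⁻¹Z`,
so that `Z = ΣA`), `g` factors through an object of `ΣT^⊥` and `Σ⁻¹Z ∈ ΣT^⊥`. -/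
def Sclass (T : C) : MorphismProperty C := fun X Y f =>
  ∃ (A : C) (h : A ⟶ X) (g : Y ⟶ (shiftFunctor C (1 : ℤ)).obj A),
    (Triangle.mk h f g ∈ distTriang C) ∧
    FactorsThru (memSigmaTperp T) g ∧ memSigmaTperp T A

/-- `X ∈ C(T)`: there is a triangle `T₁ → T₀ → X → ΣT₁` with `T₀, T₁ ∈ add T`. -/
def memCT (T X : C) : Prop :=
  ∃ (T₁ T₀ : C) (a : T₁ ⟶ T₀) (b : T₀ ⟶ X) (c : X ⟶ (shiftFunctor C (1 : ℤ)).obj T₁),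
    memAdd T T₁ ∧ memAdd T T₀ ∧ (Triangle.mk a b c ∈ distTriang C)

/-- `f : X₀ ⟶ Y` is a right `P`-approximation of `Y`. -/
def IsRightApprox (P : C → Prop) {X₀ Y : C} (f : X₀ ⟶ Y) : Prop :=
  P X₀ ∧ ∀ (W : C), P W → ∀ g : W ⟶ Y, ∃ g' : W ⟶ X₀, g' ≫ f = g

/-- `f : Y ⟶ X₀` is a left `P`-approximation of `Y`. -/
def IsLeftApprox (P : C → Prop) {Y X₀ : C} (f : Y ⟶ X₀) : Prop :=
  P X₀ ∧ ∀ (W : C), P W → ∀ g : Y ⟶ W, ∃ g' : X₀ ⟶ W, f ≫ g' = g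

/-- The map `f : X₀ ⟶ Y` is right minimal. -/
def IsRightMinimal {X₀ Y : C} (f : X₀ ⟶ Y) : Prop :=
  ∀ g : X₀ ⟶ X₀, g ≫ f = f → IsIso g

/-- The functor `H = Hom_C(T, -) : C ⥤ Mod End_C(T)ᵒᵖ`.  Here, with Mathlib's
conventions, the endomorphism ring `End (Opposite.op T)` of `T` viewed in `Cᵒᵖ` plays
the role of `End_C(T)ᵒᵖ`, so that each `Hom_C(T, X)` is a left module over it. -/
instance paperModuleEndLeftOp {X Y : C} : Module (End (Opposite.op X)) (X ⟶ Y) where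
  smul r f := r.unop ≫ f
  smul_zero _ := Limits.comp_zero
  smul_add _ _ _ := Preadditive.comp_add _ _ _ _ _ _
  add_smul _ _ _ := Preadditive.add_comp _ _ _ _ _ _
  zero_smul _ := Limits.zero_comp
  one_smul _ := Category.id_comp _
  mul_smul _ _ _ := Category.assoc _ _ _

abbrev homFunctor (T : C) : C ⥤ ModuleCat.{v} (End (Opposite.op T)) where
  obj Y := ModuleCat.of _ (T ⟶ Y)
  map f := ModuleCat.ofHom
    { toFun := fun g => g ≫ f
      map_add' := fun _ _ => Preadditive.add_comp _ _ _ _ _ _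
      map_smul' := fun _ _ => Category.assoc _ _ _ }
  map_id _ := ModuleCat.hom_ext (LinearMap.ext fun g => Category.comp_id g)
  map_comp _ _ := ModuleCat.hom_ext (LinearMap.ext fun h => (Category.assoc _ _ _).symm)

/-- The predicate on `End_C(T)ᵒᵖ`-modules of being finite-dimensional (equivalently,
since `End_C(T)` is a finite-dimensional algebra, finitely generated). -/
abbrev isFinDim (T : C) : ModuleCat.{v} (End (Opposite.op T)) → Prop :=
  fun M => Module.Finite (End (Opposite.op T)) M

/-- The category `mod End_C(T)ᵒᵖ` of finite-dimensional `End_C(T)ᵒᵖ`-modules. -/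
abbrev fdMod (T : C) := ObjectProperty.FullSubcategory (isFinDim T)

/-- The ideal relation on `C(T)` of maps factoring through an object of `ΣT^⊥`. -/
def homRelCT (T : C) : HomRel (ObjectProperty.FullSubcategory (memCT T)) :=
  fun A B f g => FactorsThru (memSigmaTperp T) ((f.hom - g.hom : A.obj ⟶ B.obj))

/-- The ideal relation on `C(T)` of maps factoring through an object of `add ΣT`. -/
def homRelCTadd (T : C) : HomRel (ObjectProperty.FullSubcategory (memCT T)) :=
  fun A B f g => FactorsThru (memAdd ((shiftFunctor C (1 : ℤ)).obj T)) ((f.hom - g.hom : A.obj ⟶ B.obj))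

/-- The ideal relation on `C` of maps factoring through an object of `add ΣT`. -/
def homRelAdd (T : C) : HomRel C :=
  fun A B f g => FactorsThru (memAdd ((shiftFunctor C (1 : ℤ)).obj T)) (f - g)

end PaperBM

open PaperBM

/-!
Rigidity of `T` kills every map from `add T` to `Σ(add T)`. So if `T₁ → T₀' → X → ΣT₁` exhibits
`X ∈ C(T)` and `f : T₀ → X` is a right `add T`-approximation, then `f` factors through `T₀' → X`,
which in turn factors through `f`. Comparing the two triangles over `𝟙 X` makes the third
vertex `U` of the triangle on `f` a direct summand of `T₁ ⊞ T₀`. The same comparison with a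
minimal approximation gives (c) ⇒ (b). Minimal approximations exist: an approximation `T₀ → X`
that is not right minimal has, by Fitting's lemma in the finite-dimensional algebra `End T₀`,
a proper idempotent fixing it, whose image (idempotent completeness) is an approximation with
smaller endomorphism algebra. Finally a basis of `Hom(T, X)` gives an approximation, whence
(b) ⇒ (a).
-/

theorem isUnit_or_exists_isIdempotentElem_pow_mul_eq_zero {k A : Type*} [Field k] [Ring A]
    [Algebra k A] [FiniteDimensional k A] (a : A) :
    IsUnit a ∨ ∃ (n : ℕ) (e : A), IsIdempotentElem e ∧ e ≠ 1 ∧ a ^ n * (1 - e) = 0 := by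
  have : IsArtinianRing A := IsArtinianRing.of_finite k A
  -- Fitting decomposition of left multiplication by `a`: `A = ker aⁿ ⊕ aⁿ A`, and `1 = p + e`.
  obtain ⟨n, hn, hcompl⟩ := ((Filter.eventually_ge_atTop 1).and
    (LinearMap.mulLeft k a).eventually_isCompl_ker_pow_range_pow).exists
  rw [LinearMap.pow_mulLeft] at hcompl
  obtain ⟨p, hp, e, ⟨y, rfl⟩, hpe⟩ :=
    Submodule.mem_sup.mp (hcompl.sup_eq_top ▸ Submodule.mem_top (x := (1 : A)))
  simp only [LinearMap.mem_ker, LinearMap.mulLeft_apply] at hp hpe ⊢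
  by_cases he : a ^ n * y = 1
  · exact .inl ((isUnit_pow_iff (by omega)).mp
      (isUnit_iff_exists.mpr ⟨y, he, mul_eq_one_symm he⟩))
  refine .inr ⟨n, a ^ n * y, ?_, he, by rw [← hpe, add_sub_cancel_right, hp]⟩
  have hpe0 : p * (a ^ n * y) = 0 := by
    refine Submodule.disjoint_def.mp hcompl.disjoint _ ?_ ?_
    · simp [LinearMap.mem_ker, ← mul_assoc, hp]
    · refine ⟨y - y * (a ^ n * y), ?_⟩
      simp only [LinearMap.mulLeft_apply]
      rw [eq_sub_of_add_eq hpe, sub_mul, one_mul, mul_sub, mul_assoc]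
  change a ^ n * y * (a ^ n * y) = a ^ n * y
  simpa [add_mul, hpe0] using congrArg (· * (a ^ n * y)) hpe

namespace PaperBM

section Additive

variable {C : Type u} [Category.{v} C] [Preadditive C] [HasFiniteBiproducts C]

lemma memAdd_of_retract {T A B : C} (hA : memAdd T A) (s : B ⟶ A) (r : A ⟶ B)
    (hsr : s ≫ r = 𝟙 B) : memAdd T B := by
  obtain ⟨n, s', r', h⟩ := hA
  exact ⟨n, s ≫ s', r' ≫ r, by simp [reassoc_of% h, hsr]⟩

lemma memAdd_biproduct (T : C) (n : ℕ) : memAdd T (⨁ fun _ : Fin n => T) :=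
  ⟨n, 𝟙 _, 𝟙 _, Category.id_comp _⟩

lemma memAdd_biprod_biproduct [HasBinaryBiproducts C] (T : C) (n m : ℕ) :
    memAdd T ((⨁ fun _ : Fin n => T) ⊞ (⨁ fun _ : Fin m => T)) := by
  let F : Fin (n + m) → C := fun _ => T
  refine ⟨n + m,
    biprod.desc (biproduct.desc fun i => biproduct.ι F (Fin.castAdd m i))
      (biproduct.desc fun i => biproduct.ι F (Fin.natAdd n i)),
    biprod.lift (biproduct.lift fun i => biproduct.π F (Fin.castAdd m i))
      (biproduct.lift fun i => biproduct.π F (Fin.natAdd n i)), ?_⟩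
  ext i j <;> simp [biproduct.ι_π, Fin.ext_iff, F] <;> (intro; omega)

lemma memAdd_biprod [HasBinaryBiproducts C] {T A B : C} (hA : memAdd T A) (hB : memAdd T B) :
    memAdd T (A ⊞ B) := by
  obtain ⟨n, sa, ra, ha⟩ := hA
  obtain ⟨m, sb, rb, hb⟩ := hB
  exact memAdd_of_retract (memAdd_biprod_biproduct T n m) (biprod.map sa sb) (biprod.map ra rb)
    (by ext <;> simp [reassoc_of% ha, reassoc_of% hb])

lemma eq_zero_of_memAdd_source {T U Y : C} (h : ∀ g : T ⟶ Y, g = 0) (hU : memAdd T U)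
    (g : U ⟶ Y) : g = 0 := by
  obtain ⟨n, s, r, hsr⟩ := hU
  have hr : r ≫ g = 0 := biproduct.hom_ext' _ _ fun i => by
    simpa using h (biproduct.ι (fun _ : Fin n => T) i ≫ r ≫ g)
  rw [← Category.id_comp g, ← hsr, Category.assoc, hr, comp_zero]

lemma eq_zero_of_memAdd_target {D : Type*} [Category D] [Preadditive D] (F : C ⥤ D) [F.Additive]
    {T W : C} {Y : D} (h : ∀ g : Y ⟶ F.obj T, g = 0) (hW : memAdd T W) (g : Y ⟶ F.obj W) :
    g = 0 := by
  obtain ⟨n, s, r, hsr⟩ := hW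
  have hs : g ≫ F.map s = 0 := by
    rw [← cancel_mono (F.mapBiproduct _).hom, zero_comp]
    exact biproduct.hom_ext _ _ fun i => by simpa using h _
  rw [← Category.comp_id g, ← F.map_id, ← hsr, F.map_comp, ← Category.assoc, hs, zero_comp]

lemma IsRigidObj.eq_zero [HasShift C ℤ] [(shiftFunctor C (1 : ℤ)).Additive] {T U W : C}
    (hT : IsRigidObj T) (hU : memAdd T U) (hW : memAdd T W)
    (φ : U ⟶ (shiftFunctor C (1 : ℤ)).obj W) : φ = 0 :=
  eq_zero_of_memAdd_source (fun g => eq_zero_of_memAdd_target _ hT hW g) hU φ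

lemma isRightApprox_of_forall_lift {T T₀ X : C} (f : T₀ ⟶ X) (hT₀ : memAdd T T₀)
    (hf : ∀ c : T ⟶ X, ∃ c', c' ≫ f = c) : IsRightApprox (memAdd T) f := by
  refine ⟨hT₀, fun W ⟨m, s, r, hsr⟩ g => ?_⟩
  choose lift hlift using fun i => hf (biproduct.ι (fun _ : Fin m => T) i ≫ r ≫ g)
  have hdesc : biproduct.desc lift ≫ f = r ≫ g :=
    biproduct.hom_ext' _ _ fun i => by simp [hlift]
  exact ⟨s ≫ biproduct.desc lift, by rw [Category.assoc, hdesc, reassoc_of% hsr]⟩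

lemma IsRightApprox.retract {T T₀ X Y : C} {f : T₀ ⟶ X} (hf : IsRightApprox (memAdd T) f)
    (i : Y ⟶ T₀) (p : T₀ ⟶ Y) (hip : i ≫ p = 𝟙 Y) (hpf : p ≫ i ≫ f = f) :
    IsRightApprox (memAdd T) (i ≫ f) := by
  refine ⟨memAdd_of_retract hf.1 i p hip, fun W hW g => ?_⟩
  obtain ⟨g', hg'⟩ := hf.2 W hW g
  exact ⟨g' ≫ p, by rw [Category.assoc, hpf, hg']⟩

lemma exists_isRightApprox (k : Type*) [Field k] [Linear k C] (T X : C)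
    [FiniteDimensional k (T ⟶ X)] : ∃ (T₀ : C) (f : T₀ ⟶ X), IsRightApprox (memAdd T) f := by
  let b := Module.finBasis k (T ⟶ X)
  refine ⟨_, biproduct.desc b, isRightApprox_of_forall_lift _ (memAdd_biproduct T _) fun c =>
    ⟨∑ i, b.repr c i • biproduct.ι (fun _ => T) i, ?_⟩⟩
  simp [Preadditive.sum_comp, b.sum_repr c]

end Additive

section HomFinite

variable {C : Type u} [Category.{v} C] [Preadditive C]
  (k : Type*) [Field k] [Linear k C] [∀ X Y : C, FiniteDimensional k (X ⟶ Y)]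

lemma finrank_end_lt_of_retraction {Y Z : C} (i : Y ⟶ Z) (p : Z ⟶ Y) (hip : i ≫ p = 𝟙 Y)
    (hpi : p ≫ i ≠ 𝟙 Z) : Module.finrank k (Y ⟶ Y) < Module.finrank k (Z ⟶ Z) := by
  let Φ : (Y ⟶ Y) →ₗ[k] (Z ⟶ Z) := Linear.leftComp k Z p ∘ₗ Linear.rightComp k Y i
  have hΦ : Function.Injective Φ :=
    Function.LeftInverse.injective (g := fun z => i ≫ z ≫ p) fun x => by
      simp [Φ, reassoc_of% hip, hip]
  have hrange : LinearMap.range Φ ≠ ⊤ := by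
    intro htop
    obtain ⟨x, hx⟩ := LinearMap.range_eq_top.mp htop (𝟙 Z)
    change p ≫ x ≫ i = 𝟙 Z at hx
    apply hpi
    calc p ≫ i = (p ≫ x ≫ i) ≫ p ≫ i := by rw [hx, Category.id_comp]
      _ = p ≫ x ≫ i := by simp [reassoc_of% hip]
      _ = 𝟙 Z := hx
  rw [← LinearMap.finrank_range_of_inj hΦ]
  exact Submodule.finrank_lt hrange

variable [HasFiniteBiproducts C]

lemma IsRightApprox.exists_finrank_lt [IsIdempotentComplete C] {T T₀ X : C} {f : T₀ ⟶ X}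
    (hf : IsRightApprox (memAdd T) f) (hmin : ¬ IsRightMinimal f) :
    ∃ (Y : C) (f' : Y ⟶ X), IsRightApprox (memAdd T) f' ∧
      Module.finrank k (Y ⟶ Y) < Module.finrank k (T₀ ⟶ T₀) := by
  obtain ⟨g, hgf, hg⟩ : ∃ g : End T₀, g ≫ f = f ∧ ¬IsIso g := by
    simp only [IsRightMinimal, not_forall, exists_prop] at hmin
    exact hmin
  have : FiniteDimensional k (End T₀) := inferInstanceAs (FiniteDimensional k (T₀ ⟶ T₀))
  rcases isUnit_or_exists_isIdempotentElem_pow_mul_eq_zero (k := k) (A := End T₀) g with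
    hu | ⟨n, e, he, hne, hker⟩
  · exact absurd ((isUnit_iff_isIso g).mp hu) hg
  have hgn : ∀ n, (g ^ n : End T₀) ≫ f = f := by
    intro n
    induction n with
    | zero => exact Category.id_comp f
    | succ n ih => rw [pow_succ, End.mul_def, Category.assoc, ih, hgf]
  have hef : e ≫ f = f := by
    have h : ((1 : End T₀) - e) ≫ f = 0 := by
      rw [← hgn n, ← Category.assoc, ← End.mul_def, hker, zero_comp]
    rwa [Preadditive.sub_comp, End.one_def, Category.id_comp, sub_eq_zero, eq_comm] at h
  obtain ⟨Y, i, p, hip, hpi⟩ := IsIdempotentComplete.idempotents_split T₀ e he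
  exact ⟨Y, i ≫ f, hf.retract i p hip (by rw [← Category.assoc, hpi, hef]),
    finrank_end_lt_of_retraction k i p hip (hpi ▸ hne)⟩

end HomFinite

lemma exists_isRightApprox_isRightMinimal {C : Type u} [Category.{v} C] [Preadditive C]
    [HasFiniteBiproducts C] (k : Type*) [Field k] [Linear k C]
    [∀ X Y : C, FiniteDimensional k (X ⟶ Y)] [IsIdempotentComplete C] (T X : C) :
    ∃ (T₀ : C) (f : T₀ ⟶ X), IsRightApprox (memAdd T) f ∧ IsRightMinimal f := by
  obtain ⟨T₀, f, hf⟩ := exists_isRightApprox k T X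
  induction hd : Module.finrank k (T₀ ⟶ T₀) using Nat.strong_induction_on generalizing T₀ with
  | _ d ih =>
    by_cases hmin : IsRightMinimal f
    · exact ⟨T₀, f, hf, hmin⟩
    obtain ⟨Y, f', hf', hlt⟩ := hf.exists_finrank_lt k hmin
    exact ih _ (hd ▸ hlt) Y f' hf' rfl

section Triangulated

variable {C : Type u} [Category.{v} C] [Preadditive C] [HasZeroObject C] [HasShift C ℤ]
  [∀ n : ℤ, (shiftFunctor C n).Additive] [Pretriangulated C]

lemma exists_comp_eq_of_comp_shift_map_eq_zero {U T₀ X V : C} {u : U ⟶ T₀} {f : T₀ ⟶ X}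
    {w : X ⟶ (shiftFunctor C (1 : ℤ)).obj U} (h : Triangle.mk u f w ∈ distTriang C)
    (a : U ⟶ V) (ha : w ≫ (shiftFunctor C (1 : ℤ)).map a = 0) : ∃ δ : T₀ ⟶ V, u ≫ δ = a := by
  obtain ⟨(g : (shiftFunctor C (1 : ℤ)).obj T₀ ⟶ (shiftFunctor C (1 : ℤ)).obj V), hg⟩ :=
    Triangle.yoneda_exact₃ _ (rot_of_distTriang _ h) _ ha
  change (shiftFunctor C (1 : ℤ)).map a = (-(shiftFunctor C (1 : ℤ)).map u) ≫ g at hg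
  refine ⟨-(shiftFunctor C (1 : ℤ)).preimage g, (shiftFunctor C (1 : ℤ)).map_injective ?_⟩
  rw [Functor.map_comp, Functor.map_neg, Functor.map_preimage, hg, Preadditive.comp_neg,
    Preadditive.neg_comp]

variable [HasFiniteBiproducts C]

lemma memAdd_of_distTriang_of_factors {T X U T₀ U' T₀' : C} {u : U ⟶ T₀} {f : T₀ ⟶ X}
    {w : X ⟶ (shiftFunctor C (1 : ℤ)).obj U} {u' : U' ⟶ T₀'} {f' : T₀' ⟶ X}
    {w' : X ⟶ (shiftFunctor C (1 : ℤ)).obj U'} (h : Triangle.mk u f w ∈ distTriang C)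
    (hf : IsRightApprox (memAdd T) f) (h' : Triangle.mk u' f' w' ∈ distTriang C)
    (hT₀' : memAdd T T₀') (hU' : memAdd T U') (t : T₀ ⟶ T₀') (ht : t ≫ f' = f) :
    memAdd T U := by
  obtain ⟨s, hs⟩ := hf.2 T₀' hT₀' f'
  obtain ⟨(r : U' ⟶ U), -, hr⟩ := complete_distinguished_triangle_morphism₁ _ _ h' h s (𝟙 X)
    (by show f' ≫ 𝟙 X = s ≫ f; rw [Category.comp_id, hs])
  obtain ⟨(q : U ⟶ U'), -, hq⟩ := complete_distinguished_triangle_morphism₁ _ _ h h' t (𝟙 X)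
    (by show f ≫ 𝟙 X = t ≫ f'; rw [Category.comp_id, ht])
  replace hq : w ≫ (shiftFunctor C (1 : ℤ)).map q = w' := hq.trans (Category.id_comp _)
  replace hr : w' ≫ (shiftFunctor C (1 : ℤ)).map r = w := hr.trans (Category.id_comp _)
  -- `(q ≫ r, t ≫ s, 𝟙 X)` is an endomorphism of the first triangle, so `𝟙 U - q ≫ r` factors
  -- through `u` and `U` becomes a direct summand of `U' ⊞ T₀`.
  obtain ⟨δ, hδ⟩ := exists_comp_eq_of_comp_shift_map_eq_zero h (𝟙 U - q ≫ r) (by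
    rw [Functor.map_sub, CategoryTheory.Functor.map_id, Preadditive.comp_sub, Functor.map_comp,
      reassoc_of% hq, hr, Category.comp_id, sub_self])
  refine memAdd_of_retract (memAdd_biprod hU' hf.1) (biprod.lift q u) (biprod.desc r δ) ?_
  rw [biprod.lift_desc, hδ]
  abel

lemma memCT.memAdd_of_isRightApprox {T X U T₀ : C} (hT : IsRigidObj T) (hX : memCT T X)
    {u : U ⟶ T₀} {f : T₀ ⟶ X} {w : X ⟶ (shiftFunctor C (1 : ℤ)).obj U}
    (h : Triangle.mk u f w ∈ distTriang C) (hf : IsRightApprox (memAdd T) f) : memAdd T U := by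
  obtain ⟨T₁, T₀', a, b, c, hT₁, hT₀', h'⟩ := hX
  obtain ⟨t, ht⟩ := Triangle.coyoneda_exact₃ _ h' f (hT.eq_zero hf.1 hT₁ (f ≫ c))
  exact memAdd_of_distTriang_of_factors h hf h' hT₀' hT₁ t ht.symm

end Triangulated

end PaperBM

/-- Characterisation of the objects of `C(T)`:
(a) `X ∈ C(T)`; (b) in every triangle `U → T₀ →f X → ΣU` where `f` is a right
`add T`-approximation, `U ∈ add T`; (c) the same for minimal right
`add T`-approximations.  These three conditions are equivalent. -/
theorem statement_8 {C : Type u} [Category.{v} C] [Preadditive C] [HasZeroObject C]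
    [HasShift C ℤ] [∀ n : ℤ, (shiftFunctor C n).Additive] [Pretriangulated C]
    [HasFiniteBiproducts C]
    {k : Type*} [Field k] [CategoryTheory.Linear k C]
    [∀ X Y : C, FiniteDimensional k (X ⟶ Y)] [IsIdempotentComplete C]
    (T : C) (hT : IsRigidObj T) (X : C) :
    (memCT T X ↔
      (∀ (U T₀ : C) (u : U ⟶ T₀) (f : T₀ ⟶ X) (w : X ⟶ (shiftFunctor C (1 : ℤ)).obj U),
        (Triangle.mk u f w ∈ distTriang C) → IsRightApprox (memAdd T) f → memAdd T U)) ∧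
    ((∀ (U T₀ : C) (u : U ⟶ T₀) (f : T₀ ⟶ X) (w : X ⟶ (shiftFunctor C (1 : ℤ)).obj U),
        (Triangle.mk u f w ∈ distTriang C) → IsRightApprox (memAdd T) f → memAdd T U) ↔
      (∀ (U T₀ : C) (u : U ⟶ T₀) (f : T₀ ⟶ X) (w : X ⟶ (shiftFunctor C (1 : ℤ)).obj U),
        (Triangle.mk u f w ∈ distTriang C) → IsRightApprox (memAdd T) f →
          IsRightMinimal f → memAdd T U)) := by
  refine ⟨⟨fun hX U T₀ u f w h hf => hX.memAdd_of_isRightApprox hT h hf, fun hb => ?_⟩,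
    ⟨fun hb U T₀ u f w h hf _ => hb U T₀ u f w h hf, fun hc U T₀ u f w h hf => ?_⟩⟩
  · obtain ⟨T₀, f, hf⟩ := exists_isRightApprox k T X
    obtain ⟨U, u, w, h⟩ := distinguished_cocone_triangle₁ f
    exact ⟨U, T₀, u, f, w, hb U T₀ u f w h hf, hf.1, h⟩
  · obtain ⟨T₀', f', hf', hmin⟩ := exists_isRightApprox_isRightMinimal k T X
    obtain ⟨U', u', w', h'⟩ := distinguished_cocone_triangle₁ f'
    obtain ⟨t, ht⟩ := hf'.2 T₀ hf.1 f
    exact memAdd_of_distTriang_of_factors h hf h' hf'.1 (hc U' T₀' u' f' w' h' hf' hmin) t ht
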